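/- Let n ≥ 1, let A be an IFM of order n, let λ ∈ [0,1] and let p > 0 be a real number. Then for every m ≥ 1 and all i, j, the non-membership entry of the m-th power of A under the maxgeneralized mean–mingeneralized mean operation satisfies (A^m)ν i j = min over all m-paths P from i to j of wν(P). -/

import Mathlib

open Filter Topology

/-- `A` (given by membership part `Amu` and non-membership part `Anu`) is an
intuitionistic fuzzy matrix. -/
def IsIFM (n : ℕ) (Amu Anu : Fin n → Fin n → ℝ) : Prop :=
  ∀ i j, 0 ≤ Amu i j ∧ 0 ≤ Anu i j ∧ Amu i j + Anu i j ≤ 1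

/-- Powers of an IFM under the maxgeneralized mean–mingeneralized mean operation
with parameters `lam` and exponent `p`:
`A^1 = A` and `A^(k+1) = A^k ∘ A`, where
`(X ∘ A)μ i j = max_t (lam·(Xμ i t)^p + (1-lam)·(Aμ t j)^p)^(1/p)` and
`(X ∘ A)ν i j = min_t (lam·(Xν i t)^p + (1-lam)·(Aν t j)^p)^(1/p)`.
(The value at `0` is irrelevant; it is set to `A`.) -/
noncomputable def gmPow (n : ℕ) (lam p : ℝ) (Amu Anu : Fin n → Fin n → ℝ) :
    ℕ → (Fin n → Fin n → ℝ) × (Fin n → Fin n → ℝ)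
  | 0 => (Amu, Anu)
  | 1 => (Amu, Anu)
  | m + 2 =>
    let X := gmPow n lam p Amu Anu (m + 1)
    (fun i j => ⨆ t : Fin n, (lam * X.1 i t ^ p + (1 - lam) * Amu t j ^ p) ^ (1 / p),
     fun i j => ⨅ t : Fin n, (lam * X.2 i t ^ p + (1 - lam) * Anu t j ^ p) ^ (1 / p))

/-- The coefficient of the `k`-th edge in the weight of an `m`-path:
`lam^(m-1)` for the first edge and `lam^(m-1-k)·(1-lam)` afterwards. -/
noncomputable def gmCoef (lam : ℝ) (m k : ℕ) : ℝ :=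
  if k = 0 then lam ^ (m - 1) else lam ^ (m - 1 - k) * (1 - lam)

/-- Weight of an `m`-path `P` with respect to the entry matrix `B`
(`B = Aμ` gives `wμ(P)`, `B = Aν` gives `wν(P)`). -/
noncomputable def gmWeight (n m : ℕ) (lam p : ℝ) (B : Fin n → Fin n → ℝ)
    (P : Fin (m + 1) → Fin n) : ℝ :=
  (∑ k : Fin m, gmCoef lam m (k : ℕ) * B (P k.castSucc) (P k.succ) ^ p) ^ (1 / p)

/-!
Unfolding one step of the power, `(A^(m+1))ν i j` is the minimum over the penultimate
vertex `t` of `g_t ((A^m)ν i t)`, where `g_t x = (λ x^p + (1-λ) (Aν t j)^p)^(1/p)` is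
monotone on `[0, ∞)`. By induction `(A^m)ν i t` is a finite minimum of path weights, so `g_t`
passes inside that minimum; and `g_t (wν Q)` is the weight of `Q` extended by the edge
`t → j`, because appending an edge multiplies the coefficients of all earlier edges by `λ`.
-/

theorem MonotoneOn.map_ciInf_of_finite {α β ι : Type*} [ConditionallyCompleteLinearOrder α]
    [ConditionallyCompleteLinearOrder β] [Finite ι] [Nonempty ι] {f : α → β} {s : Set α}
    {g : ι → α} (hf : MonotoneOn f s) (hg : ∀ i, g i ∈ s) :
    f (⨅ i, g i) = ⨅ i, f (g i) := by
  obtain ⟨i₀, hi₀⟩ := Finite.exists_min g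
  have hmin : ⨅ i, g i = g i₀ :=
    le_antisymm (ciInf_le (Finite.bddBelow_range g) i₀) (le_ciInf hi₀)
  rw [hmin]
  exact le_antisymm (le_ciInf fun i => hf (hg i₀) (hg i) (hi₀ i))
    (ciInf_le (Finite.bddBelow_range _) i₀)

theorem monotoneOn_rpow_weightedMean {lam c p : ℝ} (hlam : 0 ≤ lam) (hc : 0 ≤ c)
    (hp : 0 ≤ p) :
    MonotoneOn (fun x : ℝ => (lam * x ^ p + c) ^ (1 / p)) (Set.Ici 0) := by
  intro x (hx : 0 ≤ x) y _ hxy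
  dsimp only
  gcongr

abbrev FinPath (n m : ℕ) (i j : Fin n) : Type :=
  {P : Fin (m + 1) → Fin n // P 0 = i ∧ P (Fin.last m) = j}

instance FinPath.nonempty {n m : ℕ} (i j : Fin n) : Nonempty (FinPath n (m + 1) i j) :=
  ⟨⟨Fin.cons i fun _ => j, Fin.cons_zero _ _, by rw [← Fin.succ_last, Fin.cons_succ]⟩⟩

theorem iInf_finPath_succ {n m : ℕ} (i j : Fin n) (F : (Fin (m + 3) → Fin n) → ℝ) :
    ⨅ P : FinPath n (m + 2) i j, F P =
      ⨅ t, ⨅ Q : FinPath n (m + 1) i t, F (Fin.snoc Q.1 j) := by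
  have : Nonempty (Fin n) := ⟨i⟩
  refine le_antisymm (le_ciInf fun t => le_ciInf fun Q => ?_) (le_ciInf fun P => ?_)
  · exact ciInf_le (Finite.bddBelow_range _)
      (⟨Fin.snoc Q.1 j, by simpa using Q.2.1, by simp⟩ : FinPath n (m + 2) i j)
  · obtain ⟨P, hP₀, hPj⟩ := P
    calc ⨅ t, ⨅ Q : FinPath n (m + 1) i t, F (Fin.snoc Q.1 j)
        ≤ ⨅ Q : FinPath n (m + 1) i (Fin.init P (Fin.last _)), F (Fin.snoc Q.1 j) :=
          ciInf_le (Finite.bddBelow_range _) _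
      _ ≤ F (Fin.snoc (Fin.init P) j) :=
          ciInf_le (Finite.bddBelow_range _) (⟨Fin.init P, hP₀, rfl⟩ : FinPath n (m + 1) i _)
      _ = F P := by rw [← hPj, Fin.snoc_init_self]

section Weight

variable {n : ℕ} {lam p : ℝ} {B : Fin n → Fin n → ℝ}

theorem gmCoef_nonneg (h0 : 0 ≤ lam) (h1 : lam ≤ 1) (m k : ℕ) : 0 ≤ gmCoef lam m k := by
  have : 0 ≤ 1 - lam := sub_nonneg.mpr h1
  unfold gmCoef
  split_ifs <;> positivity

theorem gmCoef_succ_of_le {m k : ℕ} (hk : k ≤ m) :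
    gmCoef lam (m + 2) k = lam * gmCoef lam (m + 1) k := by
  unfold gmCoef
  split_ifs
  · simp [pow_succ']
  · rw [show m + 2 - 1 - k = m + 1 - 1 - k + 1 by omega, pow_succ']
    ring

theorem sum_gmCoef_mul_rpow_nonneg (h0 : 0 ≤ lam) (h1 : lam ≤ 1) (hB : ∀ a b, 0 ≤ B a b)
    {m : ℕ} (P : Fin (m + 1) → Fin n) :
    0 ≤ ∑ k : Fin m, gmCoef lam m k * B (P k.castSucc) (P k.succ) ^ p :=
  Finset.sum_nonneg fun _ _ =>
    mul_nonneg (gmCoef_nonneg h0 h1 _ _) (Real.rpow_nonneg (hB _ _) _)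

theorem gmWeight_nonneg (h0 : 0 ≤ lam) (h1 : lam ≤ 1) (hB : ∀ a b, 0 ≤ B a b)
    {m : ℕ} (P : Fin (m + 1) → Fin n) : 0 ≤ gmWeight n m lam p B P :=
  Real.rpow_nonneg (sum_gmCoef_mul_rpow_nonneg h0 h1 hB P) _

theorem gmWeight_rpow (hp : p ≠ 0) (h0 : 0 ≤ lam) (h1 : lam ≤ 1) (hB : ∀ a b, 0 ≤ B a b)
    {m : ℕ} (P : Fin (m + 1) → Fin n) :
    gmWeight n m lam p B P ^ p =
      ∑ k : Fin m, gmCoef lam m k * B (P k.castSucc) (P k.succ) ^ p := by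
  rw [gmWeight, one_div, Real.rpow_inv_rpow (sum_gmCoef_mul_rpow_nonneg h0 h1 hB P) hp]

theorem gmWeight_one (hp : p ≠ 0) (hB : ∀ a b, 0 ≤ B a b) (P : Fin 2 → Fin n) :
    gmWeight n 1 lam p B P = B (P 0) (P (Fin.last 1)) := by
  simp [gmWeight, gmCoef, Real.rpow_rpow_inv (hB _ _) hp]

theorem gmWeight_snoc (hp : p ≠ 0) (h0 : 0 ≤ lam) (h1 : lam ≤ 1) (hB : ∀ a b, 0 ≤ B a b)
    {m : ℕ} (Q : Fin (m + 2) → Fin n) (j : Fin n) :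
    gmWeight n (m + 2) lam p B (Fin.snoc Q j) =
      (lam * gmWeight n (m + 1) lam p B Q ^ p
        + (1 - lam) * B (Q (Fin.last _)) j ^ p) ^ (1 / p) := by
  rw [gmWeight_rpow hp h0 h1 hB, gmWeight, Fin.sum_univ_castSucc, Finset.mul_sum]
  congr 2
  · refine Finset.sum_congr rfl fun k _ => ?_
    rw [Fin.val_castSucc, gmCoef_succ_of_le k.is_le]
    simp only [Fin.snoc_castSucc, Fin.succ_castSucc]
    ring
  · simp [gmCoef]

end Weight

theorem gmPow_nu_eq_inf_weight (n : ℕ) (Amu Anu : Fin n → Fin n → ℝ)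
    (hA : IsIFM n Amu Anu) (lam p : ℝ) (hlam : lam ∈ Set.Icc (0 : ℝ) 1) (hp : 0 < p)
    (m : ℕ) (hm : 1 ≤ m) (i j : Fin n) :
    (gmPow n lam p Amu Anu m).2 i j =
      ⨅ P : {P : Fin (m + 1) → Fin n // P 0 = i ∧ P (Fin.last m) = j},
        gmWeight n m lam p Anu P.1 := by
  obtain ⟨h0, h1⟩ := hlam
  have hB : ∀ a b, 0 ≤ Anu a b := fun a b => (hA a b).2.1
  obtain ⟨m, rfl⟩ : ∃ k, m = k + 1 := ⟨m - 1, by omega⟩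
  clear hm
  induction m generalizing j with
  | zero =>
    rw [iInf_congr fun P : FinPath n 1 i j => by rw [gmWeight_one hp.ne' hB, P.2.1, P.2.2]]
    exact ciInf_const.symm
  | succ m ih =>
    calc (gmPow n lam p Amu Anu (m + 2)).2 i j
        = ⨅ t, (lam * (⨅ Q : FinPath n (m + 1) i t, gmWeight n (m + 1) lam p Anu Q.1) ^ p
            + (1 - lam) * Anu t j ^ p) ^ (1 / p) := iInf_congr fun t => by rw [ih t]
      _ = ⨅ t, ⨅ Q : FinPath n (m + 1) i t, (lam * gmWeight n (m + 1) lam p Anu Q.1 ^ p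
            + (1 - lam) * Anu t j ^ p) ^ (1 / p) := iInf_congr fun t =>
          (monotoneOn_rpow_weightedMean h0
            (mul_nonneg (sub_nonneg.2 h1) (Real.rpow_nonneg (hB t j) p)) hp.le).map_ciInf_of_finite
            fun Q => gmWeight_nonneg h0 h1 hB Q.1
      _ = ⨅ t, ⨅ Q : FinPath n (m + 1) i t, gmWeight n (m + 2) lam p Anu (Fin.snoc Q.1 j) :=
          iInf_congr fun t => iInf_congr fun Q => by rw [gmWeight_snoc hp.ne' h0 h1 hB, Q.2.2]
      _ = _ := (iInf_finPath_succ i j _).symm
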